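/- arXiv:2007.02829 — 3 statements merged into one kernel-verified Lean document; each statement's English description precedes it below -/
import Mathlib

section
/- An integral solution to the parent-set ILP (each node v selects exactly one parent set W_v) represents a directed acyclic graph if and only if it satisfies the cluster constraint Σ_{v∈C} [W_v ∩ C = ∅] ≥ 1 for every nonempty cluster C ⊆ V. -/
open Finset

/-!
A nonempty cluster violates its constraint exactly when every node of it has a parent inside
it. Following parents inside such a finite cluster must revisit a node, giving a cycle;
conversely, the nodes reachable from a node on a cycle form a violated cluster, since each of
them is entered by an edge from another reachable node.
-/

namespace Relation

variable {α : Type*} {r : α → α → Prop}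

theorem exists_transGen_self_of_finset {C : Finset α} (hC : C.Nonempty)
    (h : ∀ a ∈ C, ∃ b ∈ C, r b a) : ∃ a, TransGen r a a := by
  -- a minimal element of `C` for `TransGen r` would have no predecessor in `C`
  by_contra! hacyc
  let s : C → C → Prop := fun a b => TransGen r a b
  have : IsTrans C s := ⟨fun _ _ _ => TransGen.trans⟩
  have : Std.Irrefl s := ⟨fun a => hacyc a⟩
  obtain ⟨m, -, hmin⟩ := (Finite.wellFounded_of_trans_of_irrefl s).has_min Set.univ
    ⟨⟨_, hC.choose_spec⟩, trivial⟩
  obtain ⟨b, hbC, hbm⟩ := h m m.2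
  exact hmin ⟨b, hbC⟩ trivial (TransGen.single hbm)

theorem exists_finset_of_transGen_self [Finite α] {a : α} (ha : TransGen r a a) :
    ∃ C : Finset α, C.Nonempty ∧ ∀ b ∈ C, ∃ c ∈ C, r c b := by
  let C := (Set.toFinite {b | TransGen r a b}).toFinset
  refine ⟨C, ⟨a, by simpa [C] using ha⟩, fun b hb => ?_⟩
  obtain ⟨c, hac, hcb⟩ := TransGen.tail'_iff.mp (by simpa [C] using hb)
  refine ⟨c, ?_, hcb⟩
  rcases reflTransGen_iff_eq_or_transGen.mp hac with rfl | hac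
  · simpa [C] using ha
  · simpa [C] using hac

theorem exists_transGen_self_iff_exists_finset [Finite α] :
    (∃ a, TransGen r a a) ↔ ∃ C : Finset α, C.Nonempty ∧ ∀ a ∈ C, ∃ b ∈ C, r b a :=
  ⟨fun ⟨_, ha⟩ => exists_finset_of_transGen_self ha,
    fun ⟨_, hC, h⟩ => exists_transGen_self_of_finset hC h⟩

end Relation

theorem Finset.one_le_sum_boole_iff {α : Type*} {s : Finset α} {p : α → Prop} [DecidablePred p] :
    1 ≤ ∑ a ∈ s, (if p a then (1 : ℕ) else 0) ↔ ∃ a ∈ s, p a := by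
  rw [sum_boole, Nat.cast_id, Nat.one_le_iff_ne_zero, Ne, card_eq_zero, ← Ne,
    ← nonempty_iff_ne_empty, filter_nonempty_iff]

theorem integral_solution_dag_iff_cluster_general
    (V : Type*) [Fintype V] [DecidableEq V] (W : V → Finset V) :
    (∀ v : V, ¬ Relation.TransGen (fun u w => u ∈ W w) v v) ↔
      (∀ C : Finset V, C.Nonempty →
        1 ≤ ∑ v ∈ C, (if W v ∩ C = ∅ then (1 : ℕ) else 0)) := by
  have hcluster (C : Finset V) : 1 ≤ ∑ v ∈ C, (if W v ∩ C = ∅ then (1 : ℕ) else 0) ↔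
      ¬ ∀ v ∈ C, ∃ u ∈ C, u ∈ W v := by
    rw [one_le_sum_boole_iff]
    simp [← disjoint_iff_inter_eq_empty, disjoint_right]
  simp only [hcluster, ← not_exists, Relation.exists_transGen_self_iff_exists_finset]
  simp

/-- An integral solution of the parent-set ILP (each node `v` selects exactly one parent
set `W v ⊆ V \ {v}`) represents a DAG iff it satisfies the cluster constraint
`∑_{v ∈ C} [W v ∩ C = ∅] ≥ 1` for every nonempty cluster `C ⊆ V`. -/
theorem integral_solution_dag_iff_cluster
    (V : Type*) [Fintype V] [DecidableEq V] (W : V → Finset V) (hW : ∀ v, v ∉ W v) :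
    (∀ v : V, ¬ Relation.TransGen (fun u w => u ∈ W w) v v) ↔
      (∀ C : Finset V, C.Nonempty →
        1 ≤ ∑ v ∈ C, (if W v ∩ C = ∅ then (1 : ℕ) else 0)) :=
  integral_solution_dag_iff_cluster_general V W
end

section
/- The cluster constraints imply the cycle-cut constraints: if a fractional parent-set solution satisfies the cluster constraint for a set C, then for every Hamiltonian directed cycle on C, the sum of induced edge variables along the cycle is at most |C| - 1. -/
open Finset

/-- The cluster constraint for `C` implies the cycle-cut constraint for every
Hamiltonian directed cycle on `C`: the sum of the induced edge variables
`x u v = ∑_{W : u ∈ W} I(W → v)` along the cycle is at most `|C| - 1`. -/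
theorem cluster_implies_cycle_cut
    (V : Type*) [Fintype V] [DecidableEq V]
    (I : V → Finset V → ℝ)
    (hnn : ∀ v W, 0 ≤ I v W)
    (hconv : ∀ v : V, ∑ W : Finset V, I v W = 1)
    (C : Finset V)
    (hcluster : 1 ≤ ∑ v ∈ C,
      ∑ W ∈ Finset.univ.filter (fun W : Finset V => W ∩ C = ∅), I v W)
    (l : List V) (hnodup : l.Nodup) (hl : l.toFinset = C) (hlen : 2 ≤ l.length) :
    ((l.zip (l.rotate 1)).map
        (fun p => ∑ W ∈ Finset.univ.filter (fun W : Finset V => p.1 ∈ W), I p.2 W)).sum ≤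
      (C.card : ℝ) - 1 := by
  set g : V → ℝ := fun v => ∑ W ∈ Finset.univ.filter (fun W : Finset V => W ∩ C = ∅), I v W
    with hg
  set f : V → ℝ := fun v => 1 - g v with hf
  -- pointwise bound on each pair of the zip
  have hpt : ∀ p ∈ l.zip (l.rotate 1),
      (∑ W ∈ Finset.univ.filter (fun W : Finset V => p.1 ∈ W), I p.2 W) ≤ f p.2 := by
    intro p hp
    obtain ⟨hp1, hp2⟩ := List.of_mem_zip hp
    have hu : p.1 ∈ C := hl ▸ List.mem_toFinset.2 hp1
    have hsub : Finset.univ.filter (fun W : Finset V => p.1 ∈ W) ⊆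
        Finset.univ.filter (fun W : Finset V => ¬ (W ∩ C = ∅)) := by
      intro W hW
      simp only [mem_filter, mem_univ, true_and] at hW ⊢
      intro hWC
      have : p.1 ∈ W ∩ C := Finset.mem_inter.2 ⟨hW, hu⟩
      simp [hWC] at this
    have h1 : (∑ W ∈ Finset.univ.filter (fun W : Finset V => p.1 ∈ W), I p.2 W) ≤
        ∑ W ∈ Finset.univ.filter (fun W : Finset V => ¬ (W ∩ C = ∅)), I p.2 W :=
      Finset.sum_le_sum_of_subset_of_nonneg hsub (fun W _ _ => hnn _ _)
    have h2 : g p.2 + ∑ W ∈ Finset.univ.filter (fun W : Finset V => ¬ (W ∩ C = ∅)), I p.2 W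
        = 1 := by
      rw [hg]
      rw [Finset.sum_filter_add_sum_filter_not]
      exact hconv p.2
    show _ ≤ 1 - g p.2
    linarith
  -- bound the list sum by the sum of f over the second components
  have hlist : ((l.zip (l.rotate 1)).map
      (fun p => ∑ W ∈ Finset.univ.filter (fun W : Finset V => p.1 ∈ W), I p.2 W)).sum ≤
      ((l.zip (l.rotate 1)).map (fun p => f p.2)).sum := by
    apply List.sum_le_sum
    exact hpt
  have hsnd : (l.zip (l.rotate 1)).map Prod.snd = l.rotate 1 := by
    apply List.map_snd_zip
    simp
  have hmap : ((l.zip (l.rotate 1)).map (fun p => f p.2)).sum = ((l.rotate 1).map f).sum := by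
    conv_rhs => rw [← hsnd]
    rw [List.map_map]
    rfl
  have hperm : List.Perm ((l.rotate 1).map f) (l.map f) := (l.rotate_perm 1).map f
  have hrot : ((l.rotate 1).map f).sum = (l.map f).sum := hperm.sum_eq
  have hfin : (l.map f).sum = ∑ v ∈ C, f v := by
    rw [← hl]
    exact (List.sum_toFinset f hnodup).symm
  have hsum : ∑ v ∈ C, f v = (C.card : ℝ) - ∑ v ∈ C, g v := by
    simp [hf, Finset.sum_sub_distrib]
  have := hcluster
  calc ((l.zip (l.rotate 1)).map
        (fun p => ∑ W ∈ Finset.univ.filter (fun W : Finset V => p.1 ∈ W), I p.2 W)).sum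
      ≤ ((l.zip (l.rotate 1)).map (fun p => f p.2)).sum := hlist
    _ = ∑ v ∈ C, f v := by rw [hmap, hrot, hfin]
    _ = (C.card : ℝ) - ∑ v ∈ C, g v := hsum
    _ ≤ (C.card : ℝ) - 1 := by linarith
end

section
/- If the score function decomposes as a sum of local scores, score(G) = Σ_{v∈V} c(v, Pa_G(v)), then maximizing score over all DAGs on V equals the optimum of the ILP: maximize Σ_{v,W} c(v,W)·I(W→v) over binary variables I(W→v) subject to Σ_W I(W→v) = 1 for all v and the cluster constraints Σ_{v∈C} Σ_{W∩C=∅} I(W→v) ≥ 1 for all nonempty C ⊆ V. -/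
/-!
A binary choice `I` with `∑_W I(W→v) = 1` for every `v` is the indicator of a parent function
`Pa`, and the two objectives agree under this correspondence. For such an indicator the cluster
sum of `C` counts the nodes of `C` with no parent in `C`, so the cluster constraints say that
every nonempty `C` contains such a node. That is acyclicity: a node of `C` minimal for the
well-founded parent relation has no parent in `C`, and conversely the descendants of a node
lying on a directed cycle form a nonempty set in which every node has a parent. Hence the two
sets of attainable values are equal.
-/

open Finset

section ParentSets

variable {V : Type*}

theorem acyclic_iff_forall_exists_inter_eq_empty [Fintype V] [DecidableEq V]
    (Pa : V → Finset V) :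
    (∀ v, ¬ Relation.TransGen (fun u w => u ∈ Pa w) v v) ↔
      ∀ C : Finset V, C.Nonempty → ∃ v ∈ C, Pa v ∩ C = ∅ := by
  constructor
  · intro hacyc C hC
    have hwf : WellFounded (Relation.TransGen (fun u w => u ∈ Pa w)) :=
      @Finite.wellFounded_of_trans_of_irrefl _ _ _ ⟨fun _ _ _ => .trans⟩ ⟨hacyc⟩
    obtain ⟨v, hvC, hmin⟩ := hwf.has_min C (coe_nonempty.mpr hC)
    exact ⟨v, hvC, eq_empty_of_forall_notMem fun u hu =>
      hmin u (mem_inter.mp hu).2 (.single (mem_inter.mp hu).1)⟩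
  · classical
    intro hclus v hcyc
    set D : Finset V := {w | Relation.TransGen (fun u w => u ∈ Pa w) v w}
    obtain ⟨w, hwD, hw⟩ := hclus D ⟨v, by simpa [D] using hcyc⟩
    obtain ⟨u, hvu, huw⟩ := Relation.TransGen.tail'_iff.mp (mem_filter.mp hwD).2
    have hu : u ∈ Pa w ∩ D := mem_inter.mpr ⟨huw, by simpa [D] using hcyc.trans_left hvu⟩
    simp [hw] at hu

variable [DecidableEq V]

def parentIndicator (Pa : V → Finset V) (v : V) (W : Finset V) : ℝ :=
  if W = Pa v then 1 else 0

theorem parentIndicator_eq_zero_or_eq_one (Pa : V → Finset V) (v : V) (W : Finset V) :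
    parentIndicator Pa v W = 0 ∨ parentIndicator Pa v W = 1 := by
  unfold parentIndicator
  split_ifs <;> simp

theorem sum_parentIndicator (Pa : V → Finset V) (v : V) (s : Finset (Finset V)) :
    ∑ W ∈ s, parentIndicator Pa v W = if Pa v ∈ s then 1 else 0 :=
  sum_ite_eq' s (Pa v) fun _ => 1

theorem sum_mul_parentIndicator [Fintype V] (c : V → Finset V → ℝ) (Pa : V → Finset V) :
    ∑ v : V, ∑ W : Finset V, c v W * parentIndicator Pa v W = ∑ v : V, c v (Pa v) := by
  simp [parentIndicator, mul_ite]

theorem one_le_clusterSum_parentIndicator_iff [Fintype V] (Pa : V → Finset V)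
    (C : Finset V) :
    1 ≤ ∑ v ∈ C, ∑ W ∈ univ.filter (fun W : Finset V => W ∩ C = ∅), parentIndicator Pa v W ↔
      ∃ v ∈ C, Pa v ∩ C = ∅ := by
  simp only [sum_parentIndicator, mem_filter, mem_univ, true_and, sum_boole, Nat.one_le_cast,
    one_le_card, filter_nonempty_iff]

theorem eq_parentIndicator_of_binary_of_sum_eq_one [Fintype V] (f : Finset V → ℝ)
    (hbin : ∀ W, f W = 0 ∨ f W = 1) (hsum : ∑ W : Finset V, f W = 1) :
    ∃ P : Finset V, ∀ W, f W = if W = P then 1 else 0 := by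
  have hf : f = fun W => if f W = 1 then 1 else 0 := by
    funext W
    rcases hbin W with h | h <;> simp [h]
  rw [hf, sum_boole, Nat.cast_eq_one, card_eq_one] at hsum
  obtain ⟨P, hP⟩ := hsum
  refine ⟨P, fun W => ?_⟩
  rw [hf]
  simp only [← mem_singleton, ← hP, mem_filter, mem_univ, true_and]

end ParentSets

/-- With a decomposable score `score(G) = ∑_v c(v, Pa_G(v))`, the maximum score over all
DAGs on `V` equals the optimum of the ILP: maximise `∑_{v,W} c(v,W)·I(W→v)` over binary
variables `I` subject to `∑_W I(W→v) = 1` for each `v` and the cluster constraints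
`∑_{v∈C} ∑_{W∩C=∅} I(W→v) ≥ 1` for every nonempty `C ⊆ V`. -/
theorem decomposable_score_max_eq_ilp_opt
    (V : Type*) [Fintype V] [DecidableEq V] (c : V → Finset V → ℝ) :
    sSup {s : ℝ | ∃ Pa : V → Finset V,
        (∀ v : V, ¬ Relation.TransGen (fun u w => u ∈ Pa w) v v) ∧
        s = ∑ v : V, c v (Pa v)} =
      sSup {s : ℝ | ∃ I : V → Finset V → ℝ,
        (∀ v W, I v W = 0 ∨ I v W = 1) ∧
        (∀ v : V, ∑ W : Finset V, I v W = 1) ∧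
        (∀ C : Finset V, C.Nonempty →
          1 ≤ ∑ v ∈ C, ∑ W ∈ Finset.univ.filter (fun W : Finset V => W ∩ C = ∅), I v W) ∧
        s = ∑ v : V, ∑ W : Finset V, c v W * I v W} := by
  congr 1
  ext s
  constructor
  · rintro ⟨Pa, hacyc, rfl⟩
    refine ⟨parentIndicator Pa, parentIndicator_eq_zero_or_eq_one Pa,
      fun v => by simp [sum_parentIndicator], fun C hC => ?_,
      (sum_mul_parentIndicator c Pa).symm⟩
    exact (one_le_clusterSum_parentIndicator_iff Pa C).mpr
      ((acyclic_iff_forall_exists_inter_eq_empty Pa).mp hacyc C hC)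
  · rintro ⟨I, hbin, hsum, hclus, rfl⟩
    choose Pa hPa using fun v => eq_parentIndicator_of_binary_of_sum_eq_one (I v) (hbin v) (hsum v)
    obtain rfl : I = parentIndicator Pa := funext fun v => funext (hPa v)
    refine ⟨Pa, (acyclic_iff_forall_exists_inter_eq_empty Pa).mpr fun C hC => ?_,
      sum_mul_parentIndicator c Pa⟩
    exact (one_le_clusterSum_parentIndicator_iff Pa C).mp (hclus C hC)
end
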